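/- arXiv:1510.00966 — 3 statements merged into one kernel-verified Lean document; each statement's English description precedes it below -/
import Mathlib

section
/- Let ξ : [0,∞) → ℝ be continuous with ξ(0) ≥ 0. Define η(t) = ξ(t) − min(0, min_{s∈[0,t]} ξ(s)). Then η is the unique continuous function of the form η = ξ + L, where L is nondecreasing, continuous, L(0) = 0, η(t) ≥ 0 for all t, and L increases only on the set {t : η(t) = 0} (i.e. ∫₀^∞ η(s) dL(s) = 0). -/
/-!
Write `-m = max 0 (sup_{[0,t]} (-ξ))`. Since `η = ξ + L ≥ 0` and `L` is nondecreasing with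
`L 0 = 0`, `L t ≥ L u ≥ -ξ u` for `u ≤ t`, so `L t ≥ -m`. Conversely, after the last time `s ≤ t`
with `L s ≤ -m` we have `η > ξ - m ≥ 0`, so `L` is flat there, and continuity at `s` forces
`L t = L s ≤ -m`.
-/

open Set Filter Topology

theorem ContinuousOn.le_of_flat_above {L : ℝ → ℝ} {a t c : ℝ} (hat : a ≤ t)
    (hL : ContinuousOn L (Icc a t)) (ha : L a ≤ c)
    (hflat : ∀ s ∈ Ioc a t, (∀ u ∈ Icc s t, c < L u) → L t = L s) : L t ≤ c := by
  set S := Icc a t ∩ L ⁻¹' Iic c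
  have hSbdd : BddAbove S := ⟨t, fun u hu => hu.1.2⟩
  have hS : sSup S ∈ S :=
    (hL.preimage_isClosed_of_isClosed isClosed_Icc isClosed_Iic).csSup_mem
      ⟨a, ⟨left_mem_Icc.2 hat, ha⟩⟩ hSbdd
  set s := sSup S
  rcases hS.1.2.eq_or_lt with hst | hst
  · exact hst ▸ hS.2
  have hconst : ∀ s' ∈ Ioo s t, L t = L s' := fun s' hs' =>
    hflat s' ⟨hS.1.1.trans_lt hs'.1, hs'.2.le⟩ fun u hu => by
      by_contra! hLu
      have hsu : s < u := hs'.1.trans_le hu.1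
      exact hsu.not_ge (le_csSup hSbdd ⟨⟨hS.1.1.trans hsu.le, hu.2⟩, hLu⟩)
  have hright : Tendsto L (𝓝[>] s) (𝓝 (L s)) :=
    ((hL s hS.1).mono_of_mem_nhdsWithin
      (ordConnected_Icc.mem_nhdsGT hS.1 (right_mem_Icc.2 hat) hst)).tendsto
  have hLs : L s = L t := tendsto_nhds_unique hright <| tendsto_const_nhds.congr' <|
    eventually_of_mem (Ioo_mem_nhdsGT hst) hconst
  exact hLs ▸ hS.2

theorem stmt3_general (ξ η L : ℝ → ℝ)
    (hL : ContinuousOn L (Ici 0))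
    (hdecomp : ∀ t : ℝ, 0 ≤ t → η t = ξ t + L t)
    (hLmono : MonotoneOn L (Ici 0)) (hL0 : L 0 = 0)
    (hηpos : ∀ t : ℝ, 0 ≤ t → 0 ≤ η t)
    (hflat : ∀ s t : ℝ, 0 ≤ s → s ≤ t → (∀ u ∈ Icc s t, 0 < η u) → L t = L s) :
    ∀ t : ℝ, 0 ≤ t → η t = ξ t - min 0 (sInf (ξ '' Icc 0 t)) := by
  intro t ht
  set m := min 0 (sInf (ξ '' Icc 0 t))
  have hξ_ge : ∀ u ∈ Icc 0 t, -L t ≤ ξ u := fun u hu => by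
    have hLu : L u ≤ L t := hLmono hu.1 (hu.1.trans hu.2) hu.2
    linarith [hdecomp u hu.1 ▸ hηpos u hu.1]
  have hbdd : BddBelow (ξ '' Icc 0 t) := ⟨-L t, forall_mem_image.2 hξ_ge⟩
  have hm_le : ∀ u ∈ Icc 0 t, m ≤ ξ u := fun u hu =>
    (min_le_right _ _).trans (csInf_le hbdd (mem_image_of_mem ξ hu))
  have hlower : -L t ≤ m := by
    have hLt : 0 ≤ L t := hL0 ▸ hLmono self_mem_Ici ht ht
    exact le_min (by linarith) <|
      le_csInf (image_nonempty.2 (nonempty_Icc.2 ht)) (forall_mem_image.2 hξ_ge)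
  have hupper : L t ≤ -m := by
    refine (hL.mono Icc_subset_Ici_self).le_of_flat_above ht ?_ fun s hs hgt => ?_
    · linarith [min_le_left 0 (sInf (ξ '' Icc 0 t))]
    refine hflat s t hs.1.le hs.2 fun u hu => ?_
    have hu0 : 0 ≤ u := hs.1.le.trans hu.1
    linarith [hdecomp u hu0, hgt u hu, hm_le u ⟨hu0, hu.2⟩]
  rw [hdecomp t ht, le_antisymm hupper (neg_le.1 hlower)]
  ring

/-- Uniqueness in the one-dimensional Skorokhod reflection problem: if `η = ξ + L` with `L`
nondecreasing continuous, `L 0 = 0`, `η ≥ 0`, and `L` increases only where `η = 0`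
(it is constant on any interval where `η > 0`), then necessarily
`η(t) = ξ(t) - min(0, min_{s∈[0,t]} ξ(s))`. -/
theorem stmt3 (ξ η L : ℝ → ℝ)
    (hξ : ContinuousOn ξ (Ici 0)) (hξ0 : 0 ≤ ξ 0)
    (hη : ContinuousOn η (Ici 0)) (hL : ContinuousOn L (Ici 0))
    (hdecomp : ∀ t : ℝ, 0 ≤ t → η t = ξ t + L t)
    (hLmono : MonotoneOn L (Ici 0)) (hL0 : L 0 = 0)
    (hηpos : ∀ t : ℝ, 0 ≤ t → 0 ≤ η t)
    (hflat : ∀ s t : ℝ, 0 ≤ s → s ≤ t → (∀ u ∈ Icc s t, 0 < η u) → L t = L s) :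
    ∀ t : ℝ, 0 ≤ t → η t = ξ t - min 0 (sInf (ξ '' Icc 0 t)) :=
  stmt3_general ξ η L hL hdecomp hLmono hL0 hηpos hflat
end

section
/- Let f_n, f : [0,T] → ℝ be continuous with f_n → f uniformly, and let l_n, l : [0,T] → ℝ be continuous nondecreasing functions with l_n → l uniformly. Then sup_{t∈[0,T]} |∫₀ᵗ f_n(s) dl_n(s) − ∫₀ᵗ f(s) dl(s)| → 0 as n → ∞. -/
open Set MeasureTheory Filter

/-!
Write `∫ fₙ dlₙ - ∫ f dl = ∫ (fₙ - f) dlₙ + (∫ f dlₙ - ∫ f dl)`. The first term is at most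
`sup |fₙ - f|` times the mass `lₙ t - lₙ 0`, which stays bounded. For the second, cut `(0, t]` into
`k` cells on which `f` oscillates by at most `ε`. Freezing `f` at the left end `c` of a cell `(x, y]`
costs `ε` times the masses of the cell, and the frozen terms `c (lₙ y - lₙ x)` and `c (l y - l x)`
differ by at most `2 C sup |lₙ - l|`, where `C` bounds `|f|`. Summing over the cells bounds the
second term by `ε` times the total masses plus `2 k C sup |lₙ - l|`, uniformly in `t`.
-/

namespace StieltjesFunction

variable (g h : StieltjesFunction ℝ) {φ : ℝ → ℝ} {a b : ℝ}

theorem measureReal_Ioc (hab : a ≤ b) : g.measure.real (Ioc a b) = g b - g a := by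
  rw [measureReal_def, measure_Ioc, ENNReal.toReal_ofReal (sub_nonneg.2 (g.mono hab))]

theorem abs_setIntegral_Ioc_le (hab : a ≤ b) {ε : ℝ} (hφ : ∀ x ∈ Ioc a b, |φ x| ≤ ε) :
    |∫ x in Ioc a b, φ x ∂g.measure| ≤ ε * (g b - g a) := by
  rw [← measureReal_Ioc g hab]
  exact norm_setIntegral_le_of_norm_le_const (f := φ) measure_Ioc_lt_top hφ

theorem abs_setIntegral_Ioc_sub_le (hab : a ≤ b) (hg : IntegrableOn φ (Ioc a b) g.measure)
    (hh : IntegrableOn φ (Ioc a b) h.measure) {c ε η : ℝ} (hφ : ∀ x ∈ Ioc a b, |φ x - c| ≤ ε)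
    (ha : |g a - h a| ≤ η) (hb : |g b - h b| ≤ η) :
    |(∫ x in Ioc a b, φ x ∂g.measure) - ∫ x in Ioc a b, φ x ∂h.measure|
      ≤ ε * ((g b - g a) + (h b - h a)) + 2 * |c| * η := by
  have freeze : ∀ G : StieltjesFunction ℝ, IntegrableOn φ (Ioc a b) G.measure →
      ∫ x in Ioc a b, φ x ∂G.measure
        = (∫ x in Ioc a b, (φ x - c) ∂G.measure) + c * (G b - G a) := fun G hG => by
    rw [integral_sub hG (integrableOn_const measure_Ioc_lt_top.ne), setIntegral_const,
      measureReal_Ioc G hab, smul_eq_mul]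
    ring
  have hgφ := abs_setIntegral_Ioc_le g hab hφ
  have hhφ := abs_setIntegral_Ioc_le h hab hφ
  have hmass : |(g b - g a) - (h b - h a)| ≤ 2 * η := by
    rw [abs_le] at ha hb ⊢
    constructor <;> linarith
  rw [freeze g hg, freeze h hh]
  calc _ = |((∫ x in Ioc a b, (φ x - c) ∂g.measure) - ∫ x in Ioc a b, (φ x - c) ∂h.measure)
          + c * ((g b - g a) - (h b - h a))| := by congr 1; ring
    _ ≤ |∫ x in Ioc a b, (φ x - c) ∂g.measure| + |∫ x in Ioc a b, (φ x - c) ∂h.measure|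
          + |c| * (2 * η) := by
        refine (abs_add_le _ _).trans (add_le_add (abs_sub _ _) ?_)
        rw [abs_mul]
        exact mul_le_mul_of_nonneg_left hmass (abs_nonneg c)
    _ ≤ _ := by linarith

theorem abs_setIntegral_Ioc_sub_le_of_monotone {x : ℕ → ℝ} (hx : Monotone x) {ε C η : ℝ} (k : ℕ)
    (hg : IntegrableOn φ (Ioc (x 0) (x k)) g.measure)
    (hh : IntegrableOn φ (Ioc (x 0) (x k)) h.measure)
    (hφ : ∀ i < k, ∀ y ∈ Ioc (x i) (x (i + 1)), |φ y - φ (x i)| ≤ ε)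
    (hC : ∀ i < k, |φ (x i)| ≤ C) (hgh : ∀ i ≤ k, |g (x i) - h (x i)| ≤ η) :
    |(∫ y in Ioc (x 0) (x k), φ y ∂g.measure) - ∫ y in Ioc (x 0) (x k), φ y ∂h.measure|
      ≤ ε * ((g (x k) - g (x 0)) + (h (x k) - h (x 0))) + k * (2 * C * η) := by
  induction k with
  | zero => simp
  | succ k ih =>
    have hinit : Ioc (x 0) (x k) ⊆ Ioc (x 0) (x (k + 1)) := Ioc_subset_Ioc_right (hx k.le_succ)
    have hlast : Ioc (x k) (x (k + 1)) ⊆ Ioc (x 0) (x (k + 1)) :=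
      Ioc_subset_Ioc_left (hx k.zero_le)
    have split : ∀ G : StieltjesFunction ℝ, IntegrableOn φ (Ioc (x 0) (x (k + 1))) G.measure →
        ∫ y in Ioc (x 0) (x (k + 1)), φ y ∂G.measure
          = (∫ y in Ioc (x 0) (x k), φ y ∂G.measure)
            + ∫ y in Ioc (x k) (x (k + 1)), φ y ∂G.measure := fun G hG => by
      rw [← Ioc_union_Ioc_eq_Ioc (hx k.zero_le) (hx k.le_succ),
        setIntegral_union (Ioc_disjoint_Ioc_of_le le_rfl) measurableSet_Ioc
          (hG.mono_set hinit) (hG.mono_set hlast)]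
    have hinit_le := ih (hg.mono_set hinit) (hh.mono_set hinit) (fun i hi => hφ i (by omega))
      (fun i hi => hC i (by omega)) (fun i hi => hgh i (by omega))
    have hlast_le := abs_setIntegral_Ioc_sub_le g h (hx k.le_succ) (hg.mono_set hlast)
      (hh.mono_set hlast) (hφ k k.lt_succ_self) (hgh k k.le_succ) (hgh (k + 1) le_rfl)
    have hη : 0 ≤ η := (abs_nonneg _).trans (hgh 0 k.succ.zero_le)
    have hCη := mul_le_mul_of_nonneg_right (hC k k.lt_succ_self) hη
    rw [split g hg, split h hh, add_sub_add_comm]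
    push_cast
    linarith [abs_add_le ((∫ y in Ioc (x 0) (x k), φ y ∂g.measure)
      - ∫ y in Ioc (x 0) (x k), φ y ∂h.measure) ((∫ y in Ioc (x k) (x (k + 1)), φ y ∂g.measure)
      - ∫ y in Ioc (x k) (x (k + 1)), φ y ∂h.measure)]

theorem exists_abs_setIntegral_Ioc_sub_le (hφ : ContinuousOn φ (Icc a b)) {ε : ℝ} (hε : 0 < ε) :
    ∃ K : ℝ, ∀ (g h : StieltjesFunction ℝ) (η : ℝ), (∀ x ∈ Icc a b, |g x - h x| ≤ η) →
      ∀ t ∈ Icc a b, |(∫ s in Ioc a t, φ s ∂g.measure) - ∫ s in Ioc a t, φ s ∂h.measure|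
        ≤ ε * ((g b - g a) + (h b - h a)) + K * η := by
  obtain ⟨C, hC⟩ := isCompact_Icc.exists_bound_of_continuousOn hφ
  obtain ⟨δ, hδ, hφδ⟩ := Metric.uniformContinuousOn_iff_le.1
    (isCompact_Icc.uniformContinuousOn_of_continuous hφ) ε hε
  obtain ⟨k, hk⟩ := exists_nat_gt ((b - a) / δ)
  refine ⟨k * (2 * C), fun g h η hgh t ht => ?_⟩
  have hk0 : (0 : ℝ) < k := (div_nonneg (by linarith [ht.1, ht.2]) hδ.le).trans_lt hk
  have hwidth : (t - a) / k ≤ δ := by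
    rw [div_lt_iff₀ hδ] at hk
    rw [div_le_iff₀ hk0]
    linarith [ht.2]
  set x : ℕ → ℝ := fun i => a + i * ((t - a) / k)
  have hstep : ∀ i, x (i + 1) - x i = (t - a) / k := fun i => by simp only [x]; push_cast; ring
  have hx : Monotone x := fun i j hij => by
    have : (0 : ℝ) ≤ (t - a) / k := div_nonneg (sub_nonneg.2 ht.1) hk0.le
    simp only [x]
    gcongr
  have hx0 : x 0 = a := by simp [x]
  have hxk : x k = t := by simp only [x]; field_simp; ring
  have hxI : ∀ i ≤ k, x i ∈ Icc a b := fun i hi =>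
    ⟨hx0 ▸ hx i.zero_le, (hxk ▸ hx hi).trans ht.2⟩
  have hint : ∀ G : StieltjesFunction ℝ, IntegrableOn φ (Ioc (x 0) (x k)) G.measure := fun G => by
    rw [hx0, hxk]
    exact ((hφ.mono (Icc_subset_Icc_right ht.2)).integrableOn_Icc).mono_set Ioc_subset_Icc_self
  have hosc : ∀ i < k, ∀ y ∈ Ioc (x i) (x (i + 1)), |φ y - φ (x i)| ≤ ε := fun i hi y hy => by
    have hyI : y ∈ Icc a b := ⟨(hxI i hi.le).1.trans hy.1.le, hy.2.trans (hxI (i + 1) hi).2⟩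
    refine hφδ y hyI (x i) (hxI i hi.le) ?_
    rw [Real.dist_eq, abs_of_pos (sub_pos.2 hy.1)]
    linarith [hstep i, hy.2]
  have hpartition := abs_setIntegral_Ioc_sub_le_of_monotone g h hx k (hint g) (hint h) hosc
    (fun i hi => hC (x i) (hxI i hi.le)) (fun i hi => hgh (x i) (hxI i hi))
  rw [hx0, hxk] at hpartition
  have hmono := mul_le_mul_of_nonneg_left (add_le_add (g.mono ht.2) (h.mono ht.2)) hε.le
  linarith

theorem exists_forall_abs_setIntegral_Ioc_sub_le (hφ : ContinuousOn φ (Icc a b)) {ε : ℝ}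
    (hε : 0 < ε) : ∃ δ > 0, ∀ g : StieltjesFunction ℝ, (∀ x ∈ Icc a b, |g x - h x| ≤ δ) →
      ∀ t ∈ Icc a b, |(∫ s in Ioc a t, φ s ∂g.measure) - ∫ s in Ioc a t, φ s ∂h.measure| ≤ ε := by
  set V := |h b - h a|
  have hV : 0 < 2 * V + 1 := by positivity
  obtain ⟨K, hK⟩ := exists_abs_setIntegral_Ioc_sub_le hφ (ε := ε / (2 * (2 * V + 1)))
    (by positivity)
  set δ := min (1 / 2) (ε / (2 * (|K| + 1)))
  refine ⟨δ, by positivity, fun g hg t ht => (hK g h δ hg t ht).trans ?_⟩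
  have hab : a ≤ b := ht.1.trans ht.2
  have hmass : (g b - g a) + (h b - h a) ≤ 2 * V + 1 := by
    have := abs_le.1 (hg a (left_mem_Icc.2 hab))
    have := abs_le.1 (hg b (right_mem_Icc.2 hab))
    have := le_abs_self (h b - h a)
    have : δ ≤ 1 / 2 := min_le_left _ _
    linarith
  have hvar : ε / (2 * (2 * V + 1)) * ((g b - g a) + (h b - h a)) ≤ ε / 2 :=
    calc _ ≤ ε / (2 * (2 * V + 1)) * (2 * V + 1) := by gcongr
      _ = ε / 2 := by field_simp
  have hsup : K * δ ≤ ε / 2 :=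
    calc K * δ ≤ |K| * (ε / (2 * (|K| + 1))) :=
          mul_le_mul (le_abs_self K) (min_le_right _ _) (by positivity) (abs_nonneg K)
      _ ≤ (|K| + 1) * (ε / (2 * (|K| + 1))) := by gcongr; linarith
      _ = ε / 2 := by field_simp
  linarith

theorem tendstoUniformlyOn_setIntegral_Ioc {ι : Type*} {p : Filter ι}
    {l : ι → StieltjesFunction ℝ} {l₀ : StieltjesFunction ℝ} (hφ : ContinuousOn φ (Icc a b))
    (hl : TendstoUniformlyOn (fun n => (l n : ℝ → ℝ)) l₀ p (Icc a b)) :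
    TendstoUniformlyOn (fun n t => ∫ s in Ioc a t, φ s ∂(l n).measure)
      (fun t => ∫ s in Ioc a t, φ s ∂l₀.measure) p (Icc a b) := by
  rw [Metric.tendstoUniformlyOn_iff]
  intro ε hε
  obtain ⟨δ, hδ, hclose⟩ := exists_forall_abs_setIntegral_Ioc_sub_le l₀ hφ (half_pos hε)
  filter_upwards [Metric.tendstoUniformlyOn_iff.1 hl δ hδ] with n hn t ht
  rw [Real.dist_eq, abs_sub_comm]
  refine (hclose (l n) (fun x hx => ?_) t ht).trans_lt (half_lt_self hε)
  rw [abs_sub_comm, ← Real.dist_eq]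
  exact (hn x hx).le

theorem tendstoUniformlyOn_setIntegral_Ioc_sub {ι : Type*} {p : Filter ι} {f : ι → ℝ → ℝ}
    {f₀ : ℝ → ℝ} {l : ι → StieltjesFunction ℝ} {l₀ : StieltjesFunction ℝ}
    (hf : ∀ n, ContinuousOn (f n) (Icc a b)) (hf₀ : ContinuousOn f₀ (Icc a b))
    (hfu : TendstoUniformlyOn f f₀ p (Icc a b))
    (hlu : TendstoUniformlyOn (fun n => (l n : ℝ → ℝ)) l₀ p (Icc a b)) :
    TendstoUniformlyOn (fun n t => (∫ s in Ioc a t, f n s ∂(l n).measure)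
      - ∫ s in Ioc a t, f₀ s ∂(l n).measure) 0 p (Icc a b) := by
  rw [Metric.tendstoUniformlyOn_iff]
  intro ε hε
  set M := |l₀ b - l₀ a| + 2
  have hM : 0 < M := by positivity
  filter_upwards [Metric.tendstoUniformlyOn_iff.1 hfu (ε / M) (by positivity),
    Metric.tendstoUniformlyOn_iff.1 hlu 1 one_pos] with n hfn hln t ht
  have hab : a ≤ b := ht.1.trans ht.2
  have hint : ∀ F : ℝ → ℝ, ContinuousOn F (Icc a b) → IntegrableOn F (Ioc a t) (l n).measure :=
    fun F hF => ((hF.mono (Icc_subset_Icc_right ht.2)).integrableOn_Icc).mono_set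
      Ioc_subset_Icc_self
  have hmass : l n t - l n a < M := by
    have := abs_lt.1 (Real.dist_eq _ _ ▸ hln a (left_mem_Icc.2 hab))
    have := abs_lt.1 (Real.dist_eq _ _ ▸ hln t ht)
    have := l₀.mono ht.2
    have := le_abs_self (l₀ b - l₀ a)
    linarith
  rw [Pi.zero_apply, dist_zero_left, Real.norm_eq_abs, ← integral_sub (hint _ (hf n)) (hint _ hf₀)]
  calc _ ≤ ε / M * (l n t - l n a) := abs_setIntegral_Ioc_le (l n) ht.1 fun s hs => by
          rw [abs_sub_comm, ← Real.dist_eq]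
          exact (hfn s (Icc_subset_Icc_right ht.2 (Ioc_subset_Icc_self hs))).le
    _ < ε / M * M := by gcongr
    _ = ε := div_mul_cancel₀ ε hM.ne'

end StieltjesFunction

theorem TendstoUniformlyOn.tendsto_iSup_abs_sub {ι α : Type*} {p : Filter ι} {s : Set α}
    {F : ι → α → ℝ} {G : α → ℝ} (h : TendstoUniformlyOn F G p s) :
    Tendsto (fun n => ⨆ x : s, |F n x - G x|) p (nhds 0) := by
  rw [Metric.tendsto_nhds]
  intro ε hε
  filter_upwards [Metric.tendstoUniformlyOn_iff.1 h (ε / 2) (half_pos hε)] with n hn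
  rw [Real.dist_0_eq_abs, abs_of_nonneg (Real.iSup_nonneg fun _ => abs_nonneg _)]
  refine (Real.iSup_le (fun x => ?_) (half_pos hε).le).trans_lt (half_lt_self hε)
  rw [abs_sub_comm, ← Real.dist_eq]
  exact (hn x x.2).le

theorem stmt10_general (T : ℝ)
    (f : ℕ → ℝ → ℝ) (f₀ : ℝ → ℝ)
    (l : ℕ → StieltjesFunction ℝ) (l₀ : StieltjesFunction ℝ)
    (hfc : ∀ n, ContinuousOn (f n) (Icc 0 T)) (hf₀c : ContinuousOn f₀ (Icc 0 T))
    (hfu : TendstoUniformlyOn f f₀ atTop (Icc 0 T))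
    (hlu : TendstoUniformlyOn (fun n => (l n : ℝ → ℝ)) l₀ atTop (Icc 0 T)) :
    Tendsto
      (fun n => ⨆ t : Icc (0:ℝ) T,
        |(∫ s in Ioc (0:ℝ) (t : ℝ), f n s ∂(l n).measure) -
          ∫ s in Ioc (0:ℝ) (t : ℝ), f₀ s ∂l₀.measure|)
      atTop (nhds 0) := by
  have h : TendstoUniformlyOn (fun n t => ∫ s in Ioc 0 t, f n s ∂(l n).measure)
      (fun t => ∫ s in Ioc 0 t, f₀ s ∂l₀.measure) atTop (Icc 0 T) := by
    convert (StieltjesFunction.tendstoUniformlyOn_setIntegral_Ioc_sub hfc hf₀c hfu hlu).add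
      (StieltjesFunction.tendstoUniformlyOn_setIntegral_Ioc hf₀c hlu) using 1
    · ext n t
      exact (sub_add_cancel _ _).symm
    · ext t
      exact (zero_add _).symm
  exact h.tendsto_iSup_abs_sub

/-- If `f_n → f` uniformly on `[0,T]` and the continuous nondecreasing integrators `l_n → l`
uniformly on `[0,T]`, then `∫₀ᵗ f_n dl_n → ∫₀ᵗ f dl` uniformly in `t ∈ [0,T]`. -/
theorem stmt10 (T : ℝ) (hT : 0 ≤ T)
    (f : ℕ → ℝ → ℝ) (f₀ : ℝ → ℝ)
    (l : ℕ → StieltjesFunction ℝ) (l₀ : StieltjesFunction ℝ)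
    (hfc : ∀ n, ContinuousOn (f n) (Icc 0 T)) (hf₀c : ContinuousOn f₀ (Icc 0 T))
    (hlc : ∀ n, Continuous (l n)) (hl₀c : Continuous l₀)
    (hfu : TendstoUniformlyOn f f₀ atTop (Icc 0 T))
    (hlu : TendstoUniformlyOn (fun n => (l n : ℝ → ℝ)) l₀ atTop (Icc 0 T)) :
    Tendsto
      (fun n => ⨆ t : Icc (0:ℝ) T,
        |(∫ s in Ioc (0:ℝ) (t : ℝ), f n s ∂(l n).measure) -
          ∫ s in Ioc (0:ℝ) (t : ℝ), f₀ s ∂l₀.measure|)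
      atTop (nhds 0) :=
  stmt10_general T f f₀ l l₀ hfc hf₀c hfu hlu
end

section
/- Let b⁻_d, b⁺_d : [0,T] × ℝᵈ → ℝ be continuous functions with b⁻_d ≥ c and b⁺_d ≥ c for some c > 0, let X_n → X uniformly on [0,T] in C([0,T]; ℝᵈ), and suppose sup_{t∈[0,T]} |∫₀ᵗ (b⁺_d(s,X_n(s))·1_{A_n(s)} − b⁻_d(s,X_n(s))·1_{A_n(s)^c}) ds| → 0 as n → ∞, where A_n(s) is a measurable-in-s family of events (subsets of [0,T]) — i.e. 1_{A_n} : [0,T] → {0,1} is measurable. Then for every t ∈ [0,T], ∫₀ᵗ 1_{A_n(s)} ds → ∫₀ᵗ b⁻_d(s,X(s)) / (b⁻_d(s,X(s)) + b⁺_d(s,X(s))) ds. -/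
/-!
With `φₙ = 1_{Aₙ}`, `G = b⁻(·, X) + b⁺(·, X)` and `Gₙ = b⁻(·, Xₙ) + b⁺(·, Xₙ)`, the signed integrand
is `φₙ Gₙ - b⁻(·, Xₙ)`. Since `Xₙ → X` uniformly and the coefficients are continuous, `Gₙ → G` and
`b⁻(·, Xₙ) → b⁻(·, X)` uniformly, so the primitives of `φₙ G` converge pointwise to those of
`b⁻(·, X)`. The functions `φₙ G` are bounded in `L¹`, so this upgrades, through Riemann sums over a
partition on which the continuous weight `1 / G` oscillates little, to convergence of the integrals
of `φₙ G · (1 / G) = φₙ`, which is legitimate because `G ≥ 2c > 0`.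
-/

open Set MeasureTheory Filter Topology Interval Finset

theorem intervalIntegrable_indicator_one {A : Set ℝ} (hA : MeasurableSet A) (a b : ℝ) :
    IntervalIntegrable (A.indicator fun _ => (1:ℝ)) volume a b :=
  ⟨intervalIntegrable_const.1.indicator hA, intervalIntegrable_const.2.indicator hA⟩

theorem abs_indicator_one_le_one {α : Type*} (A : Set α) (x : α) :
    |A.indicator (fun _ => (1:ℝ)) x| ≤ 1 := by
  simp only [indicator]; split_ifs <;> simp

theorem ContinuousOn.comp_graph {α β γ : Type*} [TopologicalSpace α] [TopologicalSpace β]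
    [TopologicalSpace γ] {b : α → β → γ} (hb : Continuous fun q : α × β => b q.1 q.2)
    {f : α → β} {s : Set α} (hf : ContinuousOn f s) : ContinuousOn (fun x => b x (f x)) s :=
  hb.comp_continuousOn (continuousOn_id.prodMk hf)

theorem Continuous.comp_tendstoUniformlyOn_of_isCompact {ι α β γ : Type*} [PseudoMetricSpace β]
    [ProperSpace β] [UniformSpace γ] {g : β → γ} (hg : Continuous g) {F : ι → α → β}
    {f : α → β} {p : Filter ι} {s : Set α} (hK : IsCompact (f '' s))
    (h : TendstoUniformlyOn F f p s) :
    TendstoUniformlyOn (fun i x => g (F i x)) (fun x => g (f x)) p s := by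
  refine (hK.cthickening (r := 1)).uniformContinuousOn_of_continuous hg.continuousOn
    |>.comp_tendstoUniformlyOn_eventually ?_
      (fun x hx => Metric.self_subset_cthickening _ (mem_image_of_mem f hx)) h
  filter_upwards [Metric.tendstoUniformlyOn_iff.mp h 1 one_pos] with i hi x hx
  exact Metric.mem_cthickening_of_dist_le _ _ _ _ (mem_image_of_mem f hx)
    (by rw [dist_comm]; exact (hi x hx).le)

theorem TendstoUniformlyOn.comp_graph {ι α β γ : Type*} [PseudoMetricSpace α] [ProperSpace α]
    [PseudoMetricSpace β] [ProperSpace β] [UniformSpace γ] {b : α → β → γ}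
    (hb : Continuous fun q : α × β => b q.1 q.2) {F : ι → α → β} {f : α → β} {p : Filter ι}
    {s : Set α} (hs : IsCompact s) (hf : ContinuousOn f s) (h : TendstoUniformlyOn F f p s) :
    TendstoUniformlyOn (fun i x => b x (F i x)) (fun x => b x (f x)) p s := by
  refine hb.comp_tendstoUniformlyOn_of_isCompact (F := fun i x => (x, F i x))
    (hs.image_of_continuousOn (continuousOn_id.prodMk hf)) ?_
  rw [Metric.tendstoUniformlyOn_iff] at h ⊢
  intro ε hε
  filter_upwards [h ε hε] with i hi x hx
  simpa [Prod.dist_eq] using hi x hx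

theorem tendsto_integral_of_tendsto_iSup_abs_integral {h : ℕ → ℝ → ℝ} {a b u : ℝ}
    (hh : ∀ n, IntervalIntegrable (h n) volume a b)
    (hsup : Tendsto (fun n => ⨆ v : Icc a b, |∫ s in a..(v : ℝ), h n s|) atTop (𝓝 0))
    (hu : u ∈ Icc a b) : Tendsto (fun n => ∫ s in a..u, h n s) atTop (𝓝 0) := by
  refine squeeze_zero_norm (fun n => ?_) hsup
  refine le_ciSup (f := fun v : Icc a b => |∫ s in a..(v : ℝ), h n s|)
    ⟨∫ s in a..b, |h n s|, ?_⟩ ⟨u, hu⟩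
  rintro _ ⟨v, rfl⟩
  exact (intervalIntegral.abs_integral_le_integral_abs v.2.1).trans
    (intervalIntegral.integral_mono_interval le_rfl v.2.1 v.2.2
      (Eventually.of_forall fun _ => abs_nonneg _) (hh n).abs)

theorem tendsto_integral_mul_sub_of_tendstoUniformlyOn {ι : Type*} {l : Filter ι}
    {φ F : ι → ℝ → ℝ} {f : ℝ → ℝ} {a b : ℝ} (hφ : ∀ i s, |φ i s| ≤ 1)
    (hF : TendstoUniformlyOn F f l (Ι a b)) :
    Tendsto (fun i => ∫ s in a..b, φ i s * (F i s - f s)) l (𝓝 0) := by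
  rw [Metric.tendsto_nhds]
  intro ε hε
  obtain ⟨δ, hδ, hδε⟩ := exists_pos_mul_lt hε |b - a|
  filter_upwards [Metric.tendstoUniformlyOn_iff.mp hF δ hδ] with i hi
  rw [dist_zero_right]
  calc ‖∫ s in a..b, φ i s * (F i s - f s)‖ ≤ δ * |b - a| := by
        refine intervalIntegral.norm_integral_le_of_norm_le_const fun s hs => ?_
        rw [Real.norm_eq_abs, abs_mul, ← one_mul δ, abs_sub_comm, ← Real.dist_eq]
        exact mul_le_mul (hφ i s) (hi s hs).le dist_nonneg zero_le_one
    _ < ε := by linarith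

theorem tendsto_integral_mul_add_of_tendsto_integral_signed {φ Pn Mn : ℕ → ℝ → ℝ} {P M : ℝ → ℝ}
    {a b : ℝ} (hφi : ∀ n, IntervalIntegrable (φ n) volume a b) (hφ : ∀ n s, |φ n s| ≤ 1)
    (hPn : ∀ n, ContinuousOn (Pn n) [[a, b]]) (hMn : ∀ n, ContinuousOn (Mn n) [[a, b]])
    (hP : TendstoUniformlyOn Pn P atTop [[a, b]]) (hM : TendstoUniformlyOn Mn M atTop [[a, b]])
    (hsigned : Tendsto (fun n => ∫ s in a..b, (φ n s * Pn n s - (1 - φ n s) * Mn n s))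
      atTop (𝓝 0)) :
    Tendsto (fun n => ∫ s in a..b, φ n s * (M s + P s)) atTop (𝓝 (∫ s in a..b, M s)) := by
  have hPc : ContinuousOn P [[a, b]] := hP.continuousOn (Frequently.of_forall hPn)
  have hMc : ContinuousOn M [[a, b]] := hM.continuousOn (Frequently.of_forall hMn)
  have hsplit : ∀ n, ∫ s in a..b, φ n s * (M s + P s) =
      (∫ s in a..b, (φ n s * Pn n s - (1 - φ n s) * Mn n s)) + (∫ s in a..b, Mn n s) -
        ∫ s in a..b, φ n s * ((Mn n s + Pn n s) - (M s + P s)) := by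
    intro n
    have hsig : IntervalIntegrable (fun s => φ n s * Pn n s - (1 - φ n s) * Mn n s) volume a b :=
      ((hφi n).mul_continuousOn (hPn n)).sub
        ((intervalIntegrable_const.sub (hφi n)).mul_continuousOn (hMn n))
    have hdev : IntervalIntegrable (fun s => φ n s * ((Mn n s + Pn n s) - (M s + P s)))
        volume a b :=
      (hφi n).mul_continuousOn (((hMn n).add (hPn n)).sub (hMc.add hPc))
    rw [← intervalIntegral.integral_add hsig (hMn n).intervalIntegrable,
      ← intervalIntegral.integral_sub (hsig.add (hMn n).intervalIntegrable) hdev]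
    congr 1; ext s; ring
  have hlim := (hsigned.add (hM.tendsto_intervalIntegral_of_continuousOn (μ := volume)
    (Eventually.of_forall hMn))).sub
    (tendsto_integral_mul_sub_of_tendstoUniformlyOn hφ ((hM.add hP).mono uIoc_subset_uIcc))
  simp only [zero_add, sub_zero] at hlim
  exact hlim.congr fun n => (hsplit n).symm

theorem abs_integral_mul_sub_mul_integral_le {f w : ℝ → ℝ} {a b c δ : ℝ} (hab : a ≤ b)
    (hf : IntervalIntegrable f volume a b) (hw : ContinuousOn w (Icc a b))
    (hδ : ∀ s ∈ Icc a b, |w s - c| ≤ δ) :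
    |(∫ s in a..b, f s * w s) - c * ∫ s in a..b, f s| ≤ δ * ∫ s in a..b, |f s| := by
  rw [← uIcc_of_le hab] at hw
  have hfw : IntervalIntegrable (fun s => f s * (w s - c)) volume a b :=
    hf.mul_continuousOn (hw.sub continuousOn_const)
  calc |(∫ s in a..b, f s * w s) - c * ∫ s in a..b, f s|
      = |∫ s in a..b, f s * (w s - c)| := by
        rw [← intervalIntegral.integral_const_mul, ← intervalIntegral.integral_sub
          (hf.mul_continuousOn hw) (hf.const_mul c)]
        congr 2; ext s; ring
    _ ≤ ∫ s in a..b, |f s * (w s - c)| := intervalIntegral.abs_integral_le_integral_abs hab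
    _ ≤ ∫ s in a..b, δ * |f s| := by
        refine intervalIntegral.integral_mono_on hab hfw.abs (hf.abs.const_mul δ) fun s hs => ?_
        rw [abs_mul, mul_comm]
        exact mul_le_mul_of_nonneg_right (hδ s (uIcc_of_le hab ▸ hs)) (abs_nonneg _)
    _ = δ * ∫ s in a..b, |f s| := intervalIntegral.integral_const_mul _ _

theorem abs_integral_mul_sub_sum_le {f w : ℝ → ℝ} {x : ℕ → ℝ} {δ : ℝ} (hx : Monotone x) :
    ∀ {k : ℕ}, IntervalIntegrable f volume (x 0) (x k) → ContinuousOn w (Icc (x 0) (x k)) →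
      (∀ i < k, ∀ s ∈ Icc (x i) (x (i + 1)), |w s - w (x i)| ≤ δ) →
      |(∫ s in x 0..x k, f s * w s) - ∑ i ∈ range k, w (x i) * ∫ s in x i..x (i + 1), f s| ≤
        δ * ∫ s in x 0..x k, |f s|
  | 0, _, _, _ => by simp
  | k + 1, hf, hw, hosc => by
    have h0k : x 0 ≤ x k := hx (Nat.zero_le k)
    have hkk : x k ≤ x (k + 1) := hx k.le_succ
    have hsub₁ : [[x 0, x k]] ⊆ [[x 0, x (k + 1)]] :=
      uIcc_subset_uIcc left_mem_uIcc (mem_uIcc_of_le h0k hkk)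
    have hsub₂ : [[x k, x (k + 1)]] ⊆ [[x 0, x (k + 1)]] :=
      uIcc_subset_uIcc (mem_uIcc_of_le h0k hkk) right_mem_uIcc
    have hf₁ := hf.mono_set hsub₁
    have hf₂ := hf.mono_set hsub₂
    have hw' : ContinuousOn w [[x 0, x (k + 1)]] := uIcc_of_le (h0k.trans hkk) ▸ hw
    have ih := abs_integral_mul_sub_sum_le hx hf₁ (hw.mono (Icc_subset_Icc_right hkk))
      fun i hi => hosc i (Nat.lt_succ_of_lt hi)
    have hlast := abs_integral_mul_sub_mul_integral_le hkk hf₂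
      (hw.mono (Icc_subset_Icc_left h0k)) (hosc k k.lt_succ_self)
    rw [← intervalIntegral.integral_add_adjacent_intervals (hf₁.mul_continuousOn (hw'.mono hsub₁))
        (hf₂.mul_continuousOn (hw'.mono hsub₂)),
      ← intervalIntegral.integral_add_adjacent_intervals hf₁.abs hf₂.abs, sum_range_succ, mul_add]
    calc _ ≤ |(∫ s in x 0..x k, f s * w s) -
            ∑ i ∈ range k, w (x i) * ∫ s in x i..x (i + 1), f s| +
          |(∫ s in x k..x (k + 1), f s * w s) - w (x k) * ∫ s in x k..x (k + 1), f s| := by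
          rw [add_sub_add_comm]; exact abs_add_le _ _
      _ ≤ _ := add_le_add ih hlast

theorem exists_partition_abs_sub_le {w : ℝ → ℝ} {a b δ : ℝ} (hab : a ≤ b)
    (hw : ContinuousOn w (Icc a b)) (hδ : 0 < δ) :
    ∃ (k : ℕ) (x : ℕ → ℝ), Monotone x ∧ x 0 = a ∧ x k = b ∧
      ∀ i < k, ∀ s ∈ Icc (x i) (x (i + 1)), |w s - w (x i)| ≤ δ := by
  obtain ⟨η, hη, hηw⟩ := Metric.uniformContinuousOn_iff.mp
    (isCompact_Icc.uniformContinuousOn_of_continuous hw) δ hδ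
  set x : ℕ → ℝ := fun i => min b (a + i * (η / 2)) with hx
  have hxmem : ∀ i, x i ∈ Icc a b := fun i =>
    ⟨le_min hab (le_add_of_nonneg_right (by positivity)), min_le_left _ _⟩
  refine ⟨⌈(b - a) / (η / 2)⌉₊, x, fun i j hij => ?_, by simp [hx, hab], ?_, fun i _ s hs => ?_⟩
  · have : (i : ℝ) ≤ j := Nat.cast_le.mpr hij
    simp only [hx]; gcongr
  · refine min_eq_left ?_
    have := (div_le_iff₀ (half_pos hη)).mp (Nat.le_ceil ((b - a) / (η / 2)))
    linarith
  · have hs' : s ∈ Icc a b := ⟨(hxmem i).1.trans hs.1, hs.2.trans (hxmem (i + 1)).2⟩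
    have hstep : x (i + 1) ≤ x i + η / 2 := by
      simp only [hx, Nat.cast_succ]
      rw [← min_add_add_right]
      exact min_le_min (le_add_of_nonneg_right (half_pos hη).le) (by linarith)
    have hdist : dist s (x i) < η := by
      rw [Real.dist_eq, abs_of_nonneg (sub_nonneg.mpr hs.1)]
      linarith [hs.2]
    rw [← Real.dist_eq]
    exact (hηw s hs' (x i) (hxmem i) hdist).le

theorem tendsto_integral_mul_of_tendsto_integral {f : ℕ → ℝ → ℝ} {g w : ℝ → ℝ} {a b C : ℝ}
    (hab : a ≤ b) (hf : ∀ n, IntervalIntegrable (f n) volume a b)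
    (hfC : ∀ n, ∫ s in a..b, |f n s| ≤ C) (hg : IntervalIntegrable g volume a b)
    (hw : ContinuousOn w (Icc a b))
    (hprim : ∀ u ∈ Icc a b, Tendsto (fun n => ∫ s in a..u, f n s) atTop (𝓝 (∫ s in a..u, g s))) :
    Tendsto (fun n => ∫ s in a..b, f n s * w s) atTop (𝓝 (∫ s in a..b, g s * w s)) := by
  rw [Metric.tendsto_nhds]
  intro ε hε
  obtain ⟨δ, hδ, hδε⟩ := exists_pos_mul_lt (half_pos hε) (C + ∫ s in a..b, |g s|)
  obtain ⟨k, x, hx, rfl, rfl, hosc⟩ := exists_partition_abs_sub_le hab hw hδ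
  have hmem : ∀ i ≤ k, x i ∈ Icc (x 0) (x k) := fun i hi => ⟨hx (Nat.zero_le i), hx hi⟩
  have hinit : ∀ {φ : ℝ → ℝ}, IntervalIntegrable φ volume (x 0) (x k) →
      ∀ i ≤ k, IntervalIntegrable φ volume (x 0) (x i) := fun h i hi =>
    h.mono_set (uIcc_subset_uIcc left_mem_uIcc (Icc_subset_uIcc (hmem i hi)))
  have hpiece : ∀ i ∈ range k, Tendsto (fun n => w (x i) * ∫ s in x i..x (i + 1), f n s) atTop
      (𝓝 (w (x i) * ∫ s in x i..x (i + 1), g s)) := by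
    intro i hi
    have hi : i < k := mem_range.mp hi
    have h := ((hprim _ (hmem _ hi)).sub (hprim _ (hmem _ hi.le))).const_mul (w (x i))
    rw [intervalIntegral.integral_interval_sub_left (hinit hg _ hi) (hinit hg _ hi.le)] at h
    exact h.congr fun n => by
      rw [intervalIntegral.integral_interval_sub_left (hinit (hf n) _ hi) (hinit (hf n) _ hi.le)]
  filter_upwards [Metric.tendsto_nhds.mp (tendsto_finsetSum _ hpiece) _ (half_pos hε)] with n hn
  have hfn := abs_integral_mul_sub_sum_le hx (hf n) hw hosc
  have hg' := abs_integral_mul_sub_sum_le hx hg hw hosc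
  have hδC := mul_le_mul_of_nonneg_left (hfC n) hδ.le
  rw [Real.dist_eq] at hn ⊢
  rw [abs_sub_comm] at hg'
  have := abs_sub_le (∫ s in x 0..x k, f n s * w s)
    (∑ i ∈ range k, w (x i) * ∫ s in x i..x (i + 1), f n s) (∫ s in x 0..x k, g s * w s)
  have := abs_sub_le (∑ i ∈ range k, w (x i) * ∫ s in x i..x (i + 1), f n s)
    (∑ i ∈ range k, w (x i) * ∫ s in x i..x (i + 1), g s) (∫ s in x 0..x k, g s * w s)
  linarith

theorem tendsto_integral_of_tendsto_integral_mul_pos {φ : ℕ → ℝ → ℝ} {G g : ℝ → ℝ} {a b : ℝ}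
    (hab : a ≤ b) (hφi : ∀ n, IntervalIntegrable (φ n) volume a b) (hφ : ∀ n s, |φ n s| ≤ 1)
    (hGc : ContinuousOn G (Icc a b)) (hG : ∀ s ∈ Icc a b, 0 < G s)
    (hg : IntervalIntegrable g volume a b)
    (hprim : ∀ u ∈ Icc a b,
      Tendsto (fun n => ∫ s in a..u, φ n s * G s) atTop (𝓝 (∫ s in a..u, g s))) :
    Tendsto (fun n => ∫ s in a..b, φ n s) atTop (𝓝 (∫ s in a..b, g s / G s)) := by
  have hGc' : ContinuousOn G [[a, b]] := uIcc_of_le hab ▸ hGc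
  have hbound : ∀ n, ∫ s in a..b, |φ n s * G s| ≤ ∫ s in a..b, G s := fun n => by
    refine intervalIntegral.integral_mono_on hab ((hφi n).mul_continuousOn hGc').abs
      hGc'.intervalIntegrable fun s hs => ?_
    rw [abs_mul, abs_of_pos (hG s hs)]
    exact mul_le_of_le_one_left (hG s hs).le (hφ n s)
  have key := tendsto_integral_mul_of_tendsto_integral hab (fun n => (hφi n).mul_continuousOn hGc')
    hbound hg (hGc.inv₀ fun s hs => (hG s hs).ne') hprim
  simp_rw [div_eq_mul_inv]
  refine key.congr fun n => intervalIntegral.integral_congr fun s hs => ?_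
  exact mul_inv_cancel_right₀ (hG s (uIcc_of_le hab ▸ hs)).ne' _

theorem stmt11_general {d : ℕ} (T : ℝ) (c : ℝ) (hc : 0 < c)
    (bm bp : ℝ → EuclideanSpace ℝ (Fin d) → ℝ)
    (hbmc : Continuous fun q : ℝ × EuclideanSpace ℝ (Fin d) => bm q.1 q.2)
    (hbpc : Continuous fun q : ℝ × EuclideanSpace ℝ (Fin d) => bp q.1 q.2)
    (hbm : ∀ s x, c ≤ bm s x) (hbp : ∀ s x, c ≤ bp s x)
    (Xn : ℕ → ℝ → EuclideanSpace ℝ (Fin d)) (X : ℝ → EuclideanSpace ℝ (Fin d))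
    (hXnc : ∀ n, ContinuousOn (Xn n) (Icc 0 T)) (hXc : ContinuousOn X (Icc 0 T))
    (hXu : TendstoUniformlyOn Xn X atTop (Icc 0 T))
    (A : ℕ → Set ℝ) (hA : ∀ n, MeasurableSet (A n))
    (hsigned : Tendsto
      (fun n => ⨆ t : Icc (0:ℝ) T,
        |∫ s in (0:ℝ)..(t : ℝ),
          ((A n).indicator (fun _ => (1:ℝ)) s * bp s (Xn n s) -
            (1 - (A n).indicator (fun _ => (1:ℝ)) s) * bm s (Xn n s))|)
      atTop (nhds 0)) :
    ∀ t ∈ Icc 0 T,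
      Tendsto (fun n => ∫ s in (0:ℝ)..t, (A n).indicator (fun _ => (1:ℝ)) s) atTop
        (nhds (∫ s in (0:ℝ)..t, bm s (X s) / (bm s (X s) + bp s (X s)))) := by
  intro t ht
  have hIccT : [[0, T]] = Icc 0 T := uIcc_of_le (ht.1.trans ht.2)
  have h0t : Icc 0 t ⊆ Icc 0 T := Icc_subset_Icc_right ht.2
  have hIi := fun n => intervalIntegrable_indicator_one (hA n)
  have hprim : ∀ u ∈ Icc 0 t, Tendsto (fun n => ∫ s in (0:ℝ)..u,
      (A n).indicator (fun _ => (1:ℝ)) s * (bm s (X s) + bp s (X s))) atTop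
      (𝓝 (∫ s in (0:ℝ)..u, bm s (X s))) := by
    intro u hu
    have hsub : [[0, u]] ⊆ Icc 0 T := by
      rw [uIcc_of_le hu.1]; exact (Icc_subset_Icc_right hu.2).trans h0t
    refine tendsto_integral_mul_add_of_tendsto_integral_signed (fun n => hIi n 0 u)
      (fun n => abs_indicator_one_le_one (A n))
      (fun n => ((hXnc n).comp_graph hbpc).mono hsub)
      (fun n => ((hXnc n).comp_graph hbmc).mono hsub)
      ((hXu.comp_graph hbpc isCompact_Icc hXc).mono hsub)
      ((hXu.comp_graph hbmc isCompact_Icc hXc).mono hsub)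
      (tendsto_integral_of_tendsto_iSup_abs_integral (fun n => ?_) hsigned (h0t hu))
    exact ((hIi n 0 T).mul_continuousOn (hIccT ▸ (hXnc n).comp_graph hbpc)).sub
      ((intervalIntegrable_const.sub (hIi n 0 T)).mul_continuousOn
        (hIccT ▸ (hXnc n).comp_graph hbmc))
  exact tendsto_integral_of_tendsto_integral_mul_pos ht.1 (fun n => hIi n 0 t)
    (fun n => abs_indicator_one_le_one (A n))
    (((hXc.comp_graph hbmc).add (hXc.comp_graph hbpc)).mono h0t)
    (fun s _ => by linarith [hbm s (X s), hbp s (X s)])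
    (uIcc_of_le ht.1 ▸ (hXc.comp_graph hbmc).mono h0t).intervalIntegrable hprim

/-- Deterministic content of Lemma 5 (`lem_time`): if the signed occupation integral tends to
zero uniformly on `[0,T]`, then the occupation time of `A n` converges to the weighted average
`∫₀ᵗ b⁻/(b⁻ + b⁺)` along the limit path. -/
theorem stmt11 {d : ℕ} (T : ℝ) (hT : 0 ≤ T) (c : ℝ) (hc : 0 < c)
    (bm bp : ℝ → EuclideanSpace ℝ (Fin d) → ℝ)
    (hbmc : Continuous fun q : ℝ × EuclideanSpace ℝ (Fin d) => bm q.1 q.2)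
    (hbpc : Continuous fun q : ℝ × EuclideanSpace ℝ (Fin d) => bp q.1 q.2)
    (hbm : ∀ s x, c ≤ bm s x) (hbp : ∀ s x, c ≤ bp s x)
    (Xn : ℕ → ℝ → EuclideanSpace ℝ (Fin d)) (X : ℝ → EuclideanSpace ℝ (Fin d))
    (hXnc : ∀ n, ContinuousOn (Xn n) (Icc 0 T)) (hXc : ContinuousOn X (Icc 0 T))
    (hXu : TendstoUniformlyOn Xn X atTop (Icc 0 T))
    (A : ℕ → Set ℝ) (hA : ∀ n, MeasurableSet (A n))
    (hsigned : Tendsto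
      (fun n => ⨆ t : Icc (0:ℝ) T,
        |∫ s in (0:ℝ)..(t : ℝ),
          ((A n).indicator (fun _ => (1:ℝ)) s * bp s (Xn n s) -
            (1 - (A n).indicator (fun _ => (1:ℝ)) s) * bm s (Xn n s))|)
      atTop (nhds 0)) :
    ∀ t ∈ Icc 0 T,
      Tendsto (fun n => ∫ s in (0:ℝ)..t, (A n).indicator (fun _ => (1:ℝ)) s) atTop
        (nhds (∫ s in (0:ℝ)..t, bm s (X s) / (bm s (X s) + bp s (X s)))) :=
  stmt11_general T c hc bm bp hbmc hbpc hbm hbp Xn X hXnc hXc hXu A hA hsigned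
end
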